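/- For an integer m > 0 and a weakly increasing tuple λ ∈ ℕ^m, the number of semistandard Young tableaux of shape λ on alphabet [m] equals V(λ+δ)/V(δ), where δ = (0,1,...,m-1) and V(x) = ∏_{1≤i<j≤m}(x_j - x_i). -/

import Mathlib

/-- A semistandard Young tableau (in the paper's convention) of shape `lam`
(weakly increasing row lengths, rows indexed bottom to top) on alphabet `Fin m`:
entries weakly decrease along each row from left to right, and strictly
decrease from top to bottom along each column. -/
def IsSSYT {m : ℕ} (lam : Fin m → ℕ) (T : (i : Fin m) → Fin (lam i) → Fin m) : Prop :=
  (∀ (i : Fin m) (j j' : Fin (lam i)), j ≤ j' → T i j' ≤ T i j) ∧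
  (∀ (i i' : Fin m), i < i' → ∀ (j : Fin (lam i)) (j' : Fin (lam i')),
      (j : ℕ) = (j' : ℕ) → T i j < T i' j')

/-- The number of cells of the tableau `T` whose entry is the letter `k`. -/
def cellCount {m : ℕ} (lam : Fin m → ℕ)
    (T : (i : Fin m) → Fin (lam i) → Fin m) (k : Fin m) : ℕ :=
  ∑ i : Fin m, (Finset.univ.filter fun j : Fin (lam i) => T i j = k).card

open scoped Classical in
/-- The Schur polynomial of shape `lam` evaluated at `u`, defined combinatorially
(Littlewood's definition) as the sum over all semistandard Young tableaux of
shape `lam` on alphabet `[m]` of the monomial `∏ k, u k ^ (number of k's in T)`. -/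
noncomputable def schur {m : ℕ} (lam : Fin m → ℕ) (u : Fin m → ℝ) : ℝ :=
  ∑ T ∈ Finset.univ.filter (IsSSYT lam), ∏ k : Fin m, u k ^ cellCount lam T k

/-!
Deleting the cells that contain `0` from a semistandard tableau of shape `λ` on `[m + 1]` (they
fill the bottom row and the right ends of the other rows) and lowering the remaining entries by
one is a bijection onto the semistandard tableaux on `[m]` whose shapes `μ` interlace `λ`, i.e.
`λ i ≤ μ i ≤ λ (i + 1)`. On the other side, `V(x) / V(δ)` is the binomial determinant
`det (x i choose j)`, because the falling factorials `j! * (X choose j)` are monic. Summing the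
rows `(μ i + i choose j)_j` over the interval `λ i ≤ μ i ≤ λ (i + 1)` telescopes by the
hockey-stick identity, so by multilinearity in the rows the binomial determinant of `λ + δ` obeys
the same branching recursion as the number of tableaux.
-/

open Finset Matrix

section

variable {R : Type*} [CommRing R] {m : ℕ}

theorem Matrix.det_of_sum_eq_sum_piFinset {n α : Type*} [Fintype n] [DecidableEq n]
    (s : n → Finset α) (f : n → α → n → R) :
    (of fun i j => ∑ t ∈ s i, f i t j).det =
      ∑ b ∈ Fintype.piFinset s, (of fun i j => f i (b i) j).det := by
  have h := (detRowAlternating (R := R) (n := n)).map_sum_finset (fun i t j => f i t j) s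
  simp only [Finset.sum_fn] at h
  exact h

theorem Matrix.det_eq_det_succ_sub_castSucc {A : Matrix (Fin (m + 1)) (Fin (m + 1)) R}
    (hA : ∀ i, A i 0 = 1) :
    A.det = (of fun i j : Fin m => A i.succ j.succ - A i.castSucc j.succ).det := by
  let B : Matrix (Fin (m + 1)) (Fin (m + 1)) R := Fin.cases (A 0) fun i => A i.succ - A i.castSucc
  have hB : A.det = B.det :=
    det_eq_of_forall_row_eq_smul_add_pred (fun _ => 1) (fun _ => rfl) fun i j => by simp [B]
  rw [hB, det_succ_column_zero, Fin.sum_univ_succ, Finset.sum_eq_zero fun i _ => by simp [B, hA]]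
  simp [B, hA]
  rfl

theorem sum_Icc_choose_add (c j : ℕ) {l u : ℕ} (h : l ≤ u) :
    ∑ t ∈ Icc l u, ((t + c).choose j : R) =
      ((u + c + 1).choose (j + 1) : R) - ((l + c).choose (j + 1) : R) := by
  induction u, h using Nat.le_induction with
  | base => simp [Nat.choose_succ_succ' (l + c) j]
  | succ u hlu ih =>
    rw [sum_Icc_succ_top (by omega), ih, show u + 1 + c = u + c + 1 by ring,
      Nat.choose_succ_succ' (u + c + 1) j]
    push_cast
    ring

variable (R) in
def binomialMatrix (x : Fin m → ℕ) : Matrix (Fin m) (Fin m) R :=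
  of fun i j => ((x i).choose j : R)

theorem det_vandermonde_natCast [IsDomain R] (x : Fin m → ℕ) :
    (vandermonde fun i => (x i : R)).det =
      (∏ j : Fin m, ((j : ℕ).factorial : R)) * (binomialMatrix R x).det := by
  rw [det_eval_matrixOfPolynomials_eq_det_vandermonde _ (fun j => descPochhammer R j)
    (fun j => descPochhammer_natDegree R j) (fun j => monic_descPochhammer R j), binomialMatrix,
    ← det_mul_row]
  congr 1
  ext i j
  simp [descPochhammer_eval_eq_descFactorial, Nat.descFactorial_eq_factorial_mul_choose]

theorem det_binomialMatrix_val : (binomialMatrix R fun i : Fin m => (i : ℕ)).det = 1 := by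
  rw [det_of_isLowerTriangular _ fun i j (hij : i < j) => by
    simp [binomialMatrix, Nat.choose_eq_zero_of_lt hij]]
  simp [binomialMatrix]

def interlacing (lam : Fin (m + 1) → ℕ) : Finset (Fin m → ℕ) :=
  Fintype.piFinset fun i => Icc (lam i.castSucc) (lam i.succ)

section Interlacing

variable {lam : Fin (m + 1) → ℕ} {μ : Fin m → ℕ}

theorem mem_interlacing :
    μ ∈ interlacing lam ↔ ∀ i, lam i.castSucc ≤ μ i ∧ μ i ≤ lam i.succ := by
  simp [interlacing]

theorem Monotone.of_mem_interlacing (hlam : Monotone lam) (hμ : μ ∈ interlacing lam) :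
    Monotone μ := by
  rw [mem_interlacing] at hμ
  intro i j hij
  rcases hij.lt_or_eq with hij | rfl
  · exact (hμ i).2.trans ((hlam (Fin.succ_le_castSucc_iff.2 hij)).trans (hμ j).1)
  · rfl

theorem sum_interlacing_det_binomialMatrix (hlam : Monotone lam) :
    ∑ μ ∈ interlacing lam, (binomialMatrix R fun i => μ i + i).det =
      (binomialMatrix R fun i => lam i + i).det := by
  rw [det_eq_det_succ_sub_castSucc (by simp [binomialMatrix]), interlacing]
  refine (det_of_sum_eq_sum_piFinset _
    fun i t (j : Fin m) => ((t + i : ℕ).choose j : R)).symm.trans ?_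
  congr 1
  ext i j
  simp only [of_apply, binomialMatrix, sum_Icc_choose_add _ _ (hlam (Fin.castSucc_le_succ i))]
  simp [add_assoc]

end Interlacing

theorem Fin.val_lt_card_filter_iff {n : ℕ} {p : Fin n → Prop} [DecidablePred p]
    (hp : IsLowerSet {j | p j}) (j : Fin n) : (j : ℕ) < #{j | p j} ↔ p j := by
  by_cases h : p j
  · have hsub : Iic j ⊆ ({j | p j} : Finset (Fin n)) := fun j' hj' =>
      mem_filter.2 ⟨mem_univ _, hp (mem_Iic.1 hj') h⟩
    have := card_le_card hsub
    rw [Fin.card_Iic] at this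
    simp only [h, iff_true]
    omega
  · have hsub : ({j | p j} : Finset (Fin n)) ⊆ Iio j := fun j' hj' =>
      mem_Iio.2 (lt_of_not_ge fun hjj' => h (hp hjj' (mem_filter.1 hj').2))
    simpa [h] using card_le_card hsub

theorem IsSSYT.val_le {lam : Fin m → ℕ} {T : (i : Fin m) → Fin (lam i) → Fin m}
    (hlam : Monotone lam) (hT : IsSSYT lam T) (i : Fin m) (j : Fin (lam i)) :
    (T i j : ℕ) ≤ i := by
  suffices h : ∀ d (i : Fin m) (j : Fin (lam i)), i + d < m → (T i j : ℕ) + d < m by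
    have := h (m - 1 - i) i j (by omega)
    omega
  intro d
  induction d with
  | zero => exact fun i j _ => (T i j).isLt
  | succ d ih =>
    intro i j hid
    let i' : Fin m := ⟨i + 1, by omega⟩
    have hi : i < i' := Fin.lt_def.2 (Nat.lt_add_one _)
    have hcol := hT.2 i i' hi j (Fin.castLE (hlam hi.le) j) rfl
    have := ih i' (Fin.castLE (hlam hi.le) j) (by simp [i']; omega)
    rw [Fin.lt_def] at hcol
    omega

section Branching

variable {lam : Fin (m + 1) → ℕ} {μ : Fin m → ℕ}

def nonzeroShape (T : (i : Fin (m + 1)) → Fin (lam i) → Fin (m + 1)) (i : Fin m) : ℕ :=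
  #{j | T i.succ j ≠ 0}

def padZeros (lam : Fin (m + 1) → ℕ) (T' : (i : Fin m) → Fin (μ i) → Fin m) :
    (i : Fin (m + 1)) → Fin (lam i) → Fin (m + 1) := fun i =>
  Fin.cases (motive := fun i => Fin (lam i) → Fin (m + 1)) (fun _ => 0)
    (fun i j => if h : (j : ℕ) < μ i then (T' i ⟨j, h⟩).succ else 0) i

def eraseZeros (hle : ∀ i, μ i ≤ lam i.succ)
    (T : (i : Fin (m + 1)) → Fin (lam i) → Fin (m + 1)) :
    (i : Fin m) → Fin (μ i) → Fin m := fun i j =>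
  ⟨T i.succ (Fin.castLE (hle i) j) - 1, by
    have := (T i.succ (Fin.castLE (hle i) j)).isLt
    have := i.isLt
    omega⟩

@[simp]
theorem padZeros_zero (T' : (i : Fin m) → Fin (μ i) → Fin m) (j : Fin (lam 0)) :
    padZeros lam T' 0 j = 0 := rfl

theorem padZeros_succ (T' : (i : Fin m) → Fin (μ i) → Fin m) (i : Fin m)
    (j : Fin (lam i.succ)) :
    padZeros lam T' i.succ j = if h : (j : ℕ) < μ i then (T' i ⟨j, h⟩).succ else 0 := rfl

variable {T : (i : Fin (m + 1)) → Fin (lam i) → Fin (m + 1)}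

theorem IsSSYT.ne_zero_iff (hT : IsSSYT lam T) (i : Fin m) (j : Fin (lam i.succ)) :
    T i.succ j ≠ 0 ↔ (j : ℕ) < nonzeroShape T i :=
  (Fin.val_lt_card_filter_iff (p := fun j => T i.succ j ≠ 0)
    (fun _ _ hba ha hb => ha (Fin.le_zero_iff.1 (hb ▸ hT.1 _ _ _ hba))) j).symm

theorem IsSSYT.nonzeroShape_mem_interlacing (hlam : Monotone lam) (hT : IsSSYT lam T) :
    nonzeroShape T ∈ interlacing lam := by
  refine mem_interlacing.2 fun i => ⟨?_, (card_filter_le _ _).trans_eq (card_fin _)⟩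
  by_contra! h
  have hi := Fin.castSucc_lt_succ (i := i)
  let j : Fin (lam i.castSucc) := ⟨nonzeroShape T i, h⟩
  have hcol := hT.2 _ _ hi j (Fin.castLE (hlam hi.le) j) rfl
  exact lt_irrefl _ ((hT.ne_zero_iff i _).1 (Fin.ne_zero_of_lt hcol))

theorem IsSSYT.eraseZeros (hT : IsSSYT lam T) (hle : ∀ i, μ i ≤ lam i.succ)
    (hsh : nonzeroShape T = μ) : IsSSYT μ (eraseZeros hle T) := by
  constructor
  · intro i j j' hjj'
    have hrow := hT.1 i.succ (Fin.castLE (hle i) j) (Fin.castLE (hle i) j') hjj'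
    simp only [Fin.le_def, _root_.eraseZeros] at hrow ⊢
    omega
  · intro i i' hii' j j' hjj'
    have hcol := hT.2 i.succ i'.succ (Fin.succ_lt_succ_iff.2 hii') (Fin.castLE (hle i) j)
      (Fin.castLE (hle i') j') hjj'
    have hne := (hT.ne_zero_iff i (Fin.castLE (hle i) j)).2 (hsh ▸ j.isLt)
    simp only [Fin.lt_def, _root_.eraseZeros, ne_eq, Fin.ext_iff, Fin.val_zero] at hcol hne ⊢
    omega

theorem IsSSYT.padZeros {T' : (i : Fin m) → Fin (μ i) → Fin m} (hlam : Monotone lam)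
    (hlo : ∀ i, lam i.castSucc ≤ μ i) (hT' : IsSSYT μ T') : IsSSYT lam (padZeros lam T') := by
  constructor
  · intro i j j' hjj'
    cases i using Fin.cases with
    | zero => simp
    | succ i =>
      simp only [padZeros_succ]
      split_ifs with h' h
      · exact Fin.succ_le_succ_iff.2 (hT'.1 i _ _ hjj')
      · exact absurd ((Fin.le_def.1 hjj').trans_lt h') h
      all_goals exact Fin.zero_le _
  · intro i i' hii' j j' hjj'
    obtain ⟨k, rfl⟩ := Fin.exists_succ_eq.2 (Fin.ne_zero_of_lt hii')
    have hj' : (j' : ℕ) < μ k :=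
      hjj' ▸ j.isLt.trans_le ((hlam (Fin.le_castSucc_iff.2 hii')).trans (hlo k))
    rw [padZeros_succ, dif_pos hj']
    cases i using Fin.cases with
    | zero => exact Fin.succ_pos _
    | succ i =>
      rw [padZeros_succ]
      split_ifs with h
      · exact Fin.succ_lt_succ_iff.2 (hT'.2 i k (Fin.succ_lt_succ_iff.1 hii') _ _ hjj')
      · exact Fin.succ_pos _

theorem nonzeroShape_padZeros (hhi : ∀ i, μ i ≤ lam i.succ)
    (T' : (i : Fin m) → Fin (μ i) → Fin m) :
    nonzeroShape (padZeros lam T') = μ := by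
  funext i
  have hiff (j : Fin (lam i.succ)) : padZeros lam T' i.succ j ≠ 0 ↔ (j : ℕ) < μ i := by
    rw [padZeros_succ]
    split_ifs with h <;> simp [h, Fin.succ_ne_zero]
  rw [nonzeroShape, filter_congr fun j _ => hiff j, Fin.card_filter_val_lt, min_eq_right (hhi i)]

theorem padZeros_eraseZeros (hlam : Monotone lam) (hT : IsSSYT lam T)
    (hle : ∀ i, μ i ≤ lam i.succ) (hsh : nonzeroShape T = μ) :
    padZeros lam (eraseZeros hle T) = T := by
  funext i j
  cases i using Fin.cases with
  | zero => exact Fin.ext (by simpa using (hT.val_le hlam 0 j).antisymm' (Nat.zero_le _))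
  | succ i =>
    have hne := hT.ne_zero_iff i j
    rw [hsh] at hne
    rw [padZeros_succ]
    split_ifs with h
    · have := hne.2 h
      simp only [Fin.ext_iff, Fin.val_succ, eraseZeros, Fin.castLE_mk, Fin.eta, ne_eq,
        Fin.val_zero] at this ⊢
      omega
    · exact (not_not.1 (mt hne.1 h)).symm

theorem eraseZeros_padZeros (hle : ∀ i, μ i ≤ lam i.succ)
    (T' : (i : Fin m) → Fin (μ i) → Fin m) :
    eraseZeros hle (padZeros lam T') = T' := by
  funext i j
  simp [eraseZeros, padZeros_succ]

open scoped Classical in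
theorem card_ssyt_succ (hlam : Monotone lam) :
    #(univ.filter (IsSSYT lam)) = ∑ μ ∈ interlacing lam, #(univ.filter (IsSSYT μ)) := by
  rw [card_eq_sum_card_fiberwise fun T hT =>
    (mem_filter.1 hT).2.nonzeroShape_mem_interlacing hlam]
  refine sum_congr rfl fun μ hμ => ?_
  have hle : ∀ i, μ i ≤ lam i.succ := fun i => (mem_interlacing.1 hμ i).2
  refine card_bij' (fun T _ => eraseZeros hle T) (fun T' _ => padZeros lam T') ?_ ?_ ?_ ?_
  · intro T hT
    simp only [mem_filter, mem_univ, true_and] at hT ⊢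
    exact hT.1.eraseZeros hle hT.2
  · intro T' hT'
    simp only [mem_filter, mem_univ, true_and] at hT' ⊢
    exact ⟨hT'.padZeros hlam fun i => (mem_interlacing.1 hμ i).1, nonzeroShape_padZeros hle T'⟩
  · intro T hT
    simp only [mem_filter, mem_univ, true_and] at hT
    exact padZeros_eraseZeros hlam hT.1 hle hT.2
  · exact fun T' _ => eraseZeros_padZeros hle T'

end Branching

open scoped Classical in
theorem card_ssyt_eq_det_binomialMatrix (lam : Fin m → ℕ) (hlam : Monotone lam) :
    (#(univ.filter (IsSSYT lam)) : R) = (binomialMatrix R fun i => lam i + i).det := by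
  induction m with
  | zero =>
    rw [filter_true_of_mem fun T _ => ⟨finZeroElim, finZeroElim⟩]
    simp
  | succ m ih =>
    rw [card_ssyt_succ hlam, Nat.cast_sum,
      sum_congr rfl fun μ hμ => ih μ (hlam.of_mem_interlacing hμ),
      sum_interlacing_det_binomialMatrix hlam]

end

open scoped Classical in
theorem card_ssyt_eq_weyl_dimension_general (m : ℕ) (lam : Fin m → ℕ)
    (hlam : Monotone lam) :
    ((Finset.univ.filter (IsSSYT lam)).card : ℝ) =
      (∏ i : Fin m, ∏ j ∈ Finset.Ioi i, (((lam j : ℝ) + (j : ℕ)) - ((lam i : ℝ) + (i : ℕ)))) /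
        ∏ i : Fin m, ∏ j ∈ Finset.Ioi i, (((j : ℕ) : ℝ) - ((i : ℕ) : ℝ)) := by
  have hV := det_vandermonde_natCast (R := ℝ) fun i => lam i + i
  have hδ := det_vandermonde_natCast (R := ℝ) fun i : Fin m => (i : ℕ)
  rw [← card_ssyt_eq_det_binomialMatrix lam hlam, det_vandermonde] at hV
  rw [det_binomialMatrix_val, mul_one, det_vandermonde] at hδ
  push_cast at hV
  rw [hV, hδ, mul_div_cancel_left₀ _ (by positivity)]

open scoped Classical in
theorem card_ssyt_eq_weyl_dimension (m : ℕ) (hm : 0 < m) (lam : Fin m → ℕ)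
    (hlam : Monotone lam) :
    ((Finset.univ.filter (IsSSYT lam)).card : ℝ) =
      (∏ i : Fin m, ∏ j ∈ Finset.Ioi i, (((lam j : ℝ) + (j : ℕ)) - ((lam i : ℝ) + (i : ℕ)))) /
        ∏ i : Fin m, ∏ j ∈ Finset.Ioi i, (((j : ℕ) : ℝ) - ((i : ℕ) : ℝ)) :=
  card_ssyt_eq_weyl_dimension_general m lam hlam
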